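/- Let A be a symmetric positive definite n×n real matrix with extreme eigenvalues μ_min > 1 and μ_max, and let ω > (μ_max - μ_min)/2 + 1. Then ‖(A + ωI)^{-1}‖₂ (‖ωI - A‖₂ + 2) < 1, so the NMN iteration (ωI + A) x^(k+1) = (ωI - A) x^(k) + 2(|x^(k)| + b) converges linearly from any initial vector to any solution x* of A x - |x| = b. -/

import Mathlib

open Matrix Filter

noncomputable def spec {n : ℕ} (A : Matrix (Fin n) (Fin n) ℝ) : ℝ :=
  ‖Matrix.toEuclideanCLM (𝕜 := ℝ) A‖

noncomputable def enorm2 {n : ℕ} (x : Fin n → ℝ) : ℝ :=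
  ‖(WithLp.equiv 2 (Fin n → ℝ)).symm x‖

def vabs {n : ℕ} (x : Fin n → ℝ) : Fin n → ℝ := fun i => |x i|

def entAbs {n : ℕ} (A : Matrix (Fin n) (Fin n) ℝ) : Matrix (Fin n) (Fin n) ℝ :=
  fun i j => |A i j|

def compMat {n : ℕ} (A : Matrix (Fin n) (Fin n) ℝ) : Matrix (Fin n) (Fin n) ℝ :=
  fun i j => if i = j then |A i j| else -|A i j|

noncomputable def specRad {n : ℕ} (A : Matrix (Fin n) (Fin n) ℝ) : ENNReal :=
  spectralRadius ℂ (A.map Complex.ofReal)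

/-! By the spectral theorem `A = U diag(λ) Uᵀ` with `U` orthogonal, so `ωI - A` and
`(A + ωI)⁻¹` are orthogonally similar to `diag(ω - λᵢ)` and `diag((λᵢ + ω)⁻¹)`. Their spectral
norms are therefore at most `max (ω - μ_min) (μ_max - ω)` and `(μ_min + ω)⁻¹`, and the bounds
`1 < μ_min`, `(μ_max - μ_min)/2 + 1 < ω` make `(max (ω - μ_min) (μ_max - ω) + 2) / (μ_min + ω) < 1`.
Subtracting the fixed-point form `(ωI + A) x* = (ωI - A) x* + 2(|x*| + b)` of the equation from
the iteration, and using that `|·|` is 1-Lipschitz for the Euclidean norm, the error contracts by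
this factor at every step. -/

open Unitary

namespace Matrix.IsHermitian

variable {m : Type*} [Fintype m] [DecidableEq m] {A : Matrix m m ℝ}

theorem smul_one_sub_eq (hH : A.IsHermitian) (ω : ℝ) :
    ω • 1 - A = conjStarAlgAut ℝ _ hH.eigenvectorUnitary
      (diagonal fun i => ω - hH.eigenvalues i) := by
  have hdiag : (diagonal fun i => ω - hH.eigenvalues i)
      = ω • 1 - diagonal (RCLike.ofReal ∘ hH.eigenvalues) := by
    ext i j
    by_cases h : i = j <;> simp [h]
  rw [hdiag, map_sub, map_smul, map_one, ← hH.spectral_theorem]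

theorem add_smul_one_eq (hH : A.IsHermitian) (ω : ℝ) :
    A + ω • 1 = conjStarAlgAut ℝ _ hH.eigenvectorUnitary
      (diagonal fun i => hH.eigenvalues i + ω) := by
  have hdiag : (diagonal fun i => hH.eigenvalues i + ω)
      = diagonal (RCLike.ofReal ∘ hH.eigenvalues) + ω • 1 := by
    ext i j
    by_cases h : i = j <;> simp [h]
  rw [hdiag, map_add, map_smul, map_one, ← hH.spectral_theorem]

theorem isUnit_det_add_smul_one (hH : A.IsHermitian) {ω : ℝ}
    (h : ∀ i, hH.eigenvalues i + ω ≠ 0) : IsUnit (A + ω • 1).det := by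
  rw [← isUnit_iff_isUnit_det, hH.add_smul_one_eq, isUnit_map_iff, isUnit_diagonal,
    Pi.isUnit_iff]
  exact fun i => (h i).isUnit

theorem inv_add_smul_one_eq (hH : A.IsHermitian) {ω : ℝ}
    (h : ∀ i, hH.eigenvalues i + ω ≠ 0) :
    (A + ω • 1)⁻¹ = conjStarAlgAut ℝ _ hH.eigenvectorUnitary
      (diagonal fun i => (hH.eigenvalues i + ω)⁻¹) := by
  refine inv_eq_left_inv ?_
  rw [hH.add_smul_one_eq, ← map_mul, diagonal_mul_diagonal]
  simp [h]

end Matrix.IsHermitian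

section SpectralNorm

open scoped Matrix.Norms.L2Operator

variable {n : ℕ}

theorem spec_eq_l2_opNorm (A : Matrix (Fin n) (Fin n) ℝ) : spec A = ‖A‖ := rfl

theorem spec_nonneg (A : Matrix (Fin n) (Fin n) ℝ) : 0 ≤ spec A := norm_nonneg _

theorem spec_conjStarAlgAut (U : unitary (Matrix (Fin n) (Fin n) ℝ))
    (X : Matrix (Fin n) (Fin n) ℝ) : spec (conjStarAlgAut ℝ _ U X) = spec X := by
  simp [spec_eq_l2_opNorm, CStarRing.norm_coe_unitary_mul, CStarRing.norm_mul_mem_unitary]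

theorem spec_diagonal (v : Fin n → ℝ) : spec (diagonal v) = ‖v‖ := l2_opNorm_diagonal v

end SpectralNorm

namespace Matrix.IsHermitian

variable {n : ℕ} {A : Matrix (Fin n) (Fin n) ℝ}

theorem spec_smul_one_sub (hH : A.IsHermitian) (ω : ℝ) :
    spec (ω • 1 - A) = ‖fun i => ω - hH.eigenvalues i‖ := by
  rw [hH.smul_one_sub_eq, spec_conjStarAlgAut, spec_diagonal]

theorem spec_inv_add_smul_one (hH : A.IsHermitian) {ω : ℝ}
    (h : ∀ i, hH.eigenvalues i + ω ≠ 0) :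
    spec (A + ω • 1)⁻¹ = ‖fun i => (hH.eigenvalues i + ω)⁻¹‖ := by
  rw [hH.inv_add_smul_one_eq h, spec_conjStarAlgAut, spec_diagonal]

theorem spec_smul_one_sub_le (hH : A.IsHermitian) {μmin μmax : ℝ} (hle : μmin ≤ μmax)
    (hmin : ∀ i, μmin ≤ hH.eigenvalues i) (hmax : ∀ i, hH.eigenvalues i ≤ μmax) (ω : ℝ) :
    spec (ω • 1 - A) ≤ max (ω - μmin) (μmax - ω) := by
  have hr₁ := le_max_left (ω - μmin) (μmax - ω)
  have hr₂ := le_max_right (ω - μmin) (μmax - ω)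
  rw [hH.spec_smul_one_sub, pi_norm_le_iff_of_nonneg (by linarith)]
  refine fun i => (Real.norm_eq_abs _).trans_le (abs_le.2 ⟨?_, ?_⟩)
  · linarith [hmax i]
  · linarith [hmin i]

theorem spec_inv_add_smul_one_le (hH : A.IsHermitian) {μmin ω : ℝ} (hpos : 0 < μmin + ω)
    (hmin : ∀ i, μmin ≤ hH.eigenvalues i) : spec (A + ω • 1)⁻¹ ≤ (μmin + ω)⁻¹ := by
  have hpos' i : 0 < hH.eigenvalues i + ω := by linarith [hmin i]
  rw [hH.spec_inv_add_smul_one fun i => (hpos' i).ne',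
    pi_norm_le_iff_of_nonneg (inv_pos.2 hpos).le]
  intro i
  rw [Real.norm_eq_abs, abs_of_pos (inv_pos.2 (hpos' i))]
  exact inv_anti₀ hpos (by linarith [hmin i])

end Matrix.IsHermitian

section Iteration

variable {n : ℕ}

theorem enorm2_mulVec_le (B : Matrix (Fin n) (Fin n) ℝ) (v : Fin n → ℝ) :
    enorm2 (B *ᵥ v) ≤ spec B * enorm2 v :=
  (toEuclideanCLM (𝕜 := ℝ) B).le_opNorm (WithLp.toLp 2 v)

theorem enorm2_add_le (u v : Fin n → ℝ) : enorm2 (u + v) ≤ enorm2 u + enorm2 v :=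
  norm_add_le (WithLp.toLp 2 u) (WithLp.toLp 2 v)

theorem enorm2_smul (c : ℝ) (v : Fin n → ℝ) : enorm2 (c • v) = |c| * enorm2 v :=
  norm_smul c (WithLp.toLp 2 v)

theorem enorm2_vabs_sub_vabs_le (u v : Fin n → ℝ) :
    enorm2 (vabs u - vabs v) ≤ enorm2 (u - v) := by
  simp only [enorm2, WithLp.equiv_symm_apply, EuclideanSpace.norm_eq]
  gcongr with i
  exact abs_abs_sub_abs_le_abs_sub (u i) (v i)

theorem nmn_step_sub_eq {A : Matrix (Fin n) (Fin n) ℝ} {ω : ℝ} (hM : IsUnit (A + ω • 1).det)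
    {b xs x x' : Fin n → ℝ} (hxs : A *ᵥ xs - vabs xs = b)
    (hx' : (ω • 1 + A) *ᵥ x' = (ω • 1 - A) *ᵥ x + (2 : ℝ) • (vabs x + b)) :
    x' - xs = (A + ω • 1)⁻¹ *ᵥ ((ω • 1 - A) *ᵥ (x - xs) + (2 : ℝ) • (vabs x - vabs xs)) := by
  have hfix : (ω • 1 + A) *ᵥ xs = (ω • 1 - A) *ᵥ xs + (2 : ℝ) • (vabs xs + b) := by
    rw [← hxs]
    simp only [add_mulVec, sub_mulVec, smul_mulVec, one_mulVec]
    module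
  have herr : (A + ω • 1) *ᵥ (x' - xs)
      = (ω • 1 - A) *ᵥ (x - xs) + (2 : ℝ) • (vabs x - vabs xs) := by
    rw [mulVec_sub, add_comm A, hx', hfix, mulVec_sub]
    module
  rw [← herr, mulVec_mulVec, nonsing_inv_mul _ hM, one_mulVec]

theorem enorm2_nmn_step_sub_le {A : Matrix (Fin n) (Fin n) ℝ} {ω : ℝ}
    (hM : IsUnit (A + ω • 1).det) {b xs x x' : Fin n → ℝ} (hxs : A *ᵥ xs - vabs xs = b)
    (hx' : (ω • 1 + A) *ᵥ x' = (ω • 1 - A) *ᵥ x + (2 : ℝ) • (vabs x + b)) :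
    enorm2 (x' - xs) ≤ spec (A + ω • 1)⁻¹ * (spec (ω • 1 - A) + 2) * enorm2 (x - xs) := by
  rw [nmn_step_sub_eq hM hxs hx']
  calc _ ≤ spec (A + ω • 1)⁻¹
          * enorm2 ((ω • 1 - A) *ᵥ (x - xs) + (2 : ℝ) • (vabs x - vabs xs)) :=
        enorm2_mulVec_le _ _
    _ ≤ spec (A + ω • 1)⁻¹ * (spec (ω • 1 - A) * enorm2 (x - xs) + 2 * enorm2 (x - xs)) := by
        gcongr
        · exact spec_nonneg _
        refine (enorm2_add_le _ _).trans (add_le_add (enorm2_mulVec_le _ _) ?_)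
        rw [enorm2_smul, abs_two]
        gcongr
        exact enorm2_vabs_sub_vabs_le _ _
    _ = _ := by ring

end Iteration

theorem tendsto_of_norm_sub_le_mul {E : Type*} [SeminormedAddCommGroup E] {u : ℕ → E} {a : E}
    {c : ℝ} (hc0 : 0 ≤ c) (hc1 : c < 1) (h : ∀ k, ‖u (k + 1) - a‖ ≤ c * ‖u k - a‖) :
    Tendsto u atTop (nhds a) := by
  rw [tendsto_iff_norm_sub_tendsto_zero]
  refine squeeze_zero (fun _ => norm_nonneg _)
    (fun k => le_geom (u := fun k => ‖u k - a‖) hc0 k fun j _ => h j) ?_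
  simpa using (tendsto_pow_atTop_nhds_zero_of_lt_one hc0 hc1).mul_const ‖u 0 - a‖

theorem tendsto_of_enorm2_sub_le_mul {n : ℕ} {x : ℕ → Fin n → ℝ} {xs : Fin n → ℝ} {c : ℝ}
    (hc0 : 0 ≤ c) (hc1 : c < 1) (h : ∀ k, enorm2 (x (k + 1) - xs) ≤ c * enorm2 (x k - xs)) :
    Tendsto x atTop (nhds xs) :=
  ((PiLp.continuous_ofLp 2 _).tendsto _).comp
    (tendsto_of_norm_sub_le_mul (u := fun k => WithLp.toLp 2 (x k)) hc0 hc1 h)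

theorem stmt8_general {n : ℕ} (A : Matrix (Fin n) (Fin n) ℝ) (b : Fin n → ℝ)
    (hH : A.IsHermitian) (μmin μmax : ℝ)
    (hminmem : ∃ i, hH.eigenvalues i = μmin)
    (hmin : ∀ i, μmin ≤ hH.eigenvalues i)
    (hmax : ∀ i, hH.eigenvalues i ≤ μmax)
    (hμ : 1 < μmin)
    (ω : ℝ) (hωbig : (μmax - μmin) / 2 + 1 < ω) :
    spec (A + ω • (1 : Matrix (Fin n) (Fin n) ℝ))⁻¹ *
      (spec (ω • (1 : Matrix (Fin n) (Fin n) ℝ) - A) + 2) < 1 ∧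
    ∀ xs : Fin n → ℝ, A.mulVec xs - vabs xs = b →
      ∀ x : ℕ → Fin n → ℝ,
        (∀ k, (ω • (1 : Matrix (Fin n) (Fin n) ℝ) + A).mulVec (x (k + 1)) =
          (ω • (1 : Matrix (Fin n) (Fin n) ℝ) - A).mulVec (x k) +
            (2 : ℝ) • (vabs (x k) + b)) →
        (∃ c : ℝ, c < 1 ∧ ∀ k, enorm2 (x (k + 1) - xs) ≤ c * enorm2 (x k - xs)) ∧
          Tendsto x atTop (nhds xs) := by
  obtain ⟨i₀, hi₀⟩ := hminmem
  have hle : μmin ≤ μmax := hi₀ ▸ hmax i₀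
  have hpos : 0 < μmin + ω := by linarith
  have hN := hH.spec_smul_one_sub_le hle hmin hmax ω
  have hMinv := hH.spec_inv_add_smul_one_le hpos hmin
  have hc : spec (A + ω • 1)⁻¹ * (spec (ω • 1 - A) + 2) < 1 := by
    have hr : max (ω - μmin) (μmax - ω) + 2 < μmin + ω := by
      rw [← lt_sub_iff_add_lt]
      exact max_lt (by linarith) (by linarith)
    calc _ ≤ (μmin + ω)⁻¹ * (max (ω - μmin) (μmax - ω) + 2) := by
          gcongr
          exact add_nonneg (spec_nonneg _) zero_le_two
      _ < 1 := by rwa [inv_mul_lt_one₀ hpos]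
  have hc0 : 0 ≤ spec (A + ω • 1)⁻¹ * (spec (ω • 1 - A) + 2) :=
    mul_nonneg (spec_nonneg _) (add_nonneg (spec_nonneg _) zero_le_two)
  have hM := hH.isUnit_det_add_smul_one fun i =>
    (show 0 < hH.eigenvalues i + ω by linarith [hmin i]).ne'
  refine ⟨hc, fun xs hxs x hx => ?_⟩
  have hstep k := enorm2_nmn_step_sub_le hM hxs (hx k)
  exact ⟨⟨_, hc, hstep⟩, tendsto_of_enorm2_sub_le_mul hc0 hc hstep⟩

theorem stmt8 {n : ℕ} (A : Matrix (Fin n) (Fin n) ℝ) (b : Fin n → ℝ)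
    (hA : A.PosDef) (hH : A.IsHermitian) (μmin μmax : ℝ)
    (hminmem : ∃ i, hH.eigenvalues i = μmin)
    (hmaxmem : ∃ i, hH.eigenvalues i = μmax)
    (hmin : ∀ i, μmin ≤ hH.eigenvalues i)
    (hmax : ∀ i, hH.eigenvalues i ≤ μmax)
    (hμ : 1 < μmin)
    (ω : ℝ) (hωbig : (μmax - μmin) / 2 + 1 < ω) :
    spec (A + ω • (1 : Matrix (Fin n) (Fin n) ℝ))⁻¹ *
      (spec (ω • (1 : Matrix (Fin n) (Fin n) ℝ) - A) + 2) < 1 ∧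
    ∀ xs : Fin n → ℝ, A.mulVec xs - vabs xs = b →
      ∀ x : ℕ → Fin n → ℝ,
        (∀ k, (ω • (1 : Matrix (Fin n) (Fin n) ℝ) + A).mulVec (x (k + 1)) =
          (ω • (1 : Matrix (Fin n) (Fin n) ℝ) - A).mulVec (x k) +
            (2 : ℝ) • (vabs (x k) + b)) →
        (∃ c : ℝ, c < 1 ∧ ∀ k, enorm2 (x (k + 1) - xs) ≤ c * enorm2 (x k - xs)) ∧
          Tendsto x atTop (nhds xs) :=
  stmt8_general A b hH μmin μmax hminmem hmin hmax hμ ω hωbig
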